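/- arXiv:2305.05832 — 2 statements merged into one kernel-verified Lean document; each statement's English description precedes it below -/
import Mathlib

section
/- Let A be a discrete random variable with values in a finite set not containing the null symbol φ, let B be the output of a dropout channel applied to A with transmission probability α_{A,B}, and let C be the output of a dropout channel applied to B with transmission probability α_{B,C}, where the two dropout events and A are mutually independent. Then the Shannon mutual information between the endpoints of this length-2 chain equals the product of the transmission probabilities times the entropy of the source: I(A : C) = α_{A,B} · α_{B,C} · H(A). -/
open MeasureTheory ProbabilityTheory Real
open scoped Classical

/-- Shannon entropy of a discrete (finite-valued) random variable `X`
with respect to the measure `μ`: `H(X) = ∑ₓ -P(X = x) log P(X = x)`. -/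
noncomputable def shannonEntropy {Ω : Type*} [MeasurableSpace Ω] {S : Type*} [Fintype S]
    (μ : Measure Ω) (X : Ω → S) : ℝ :=
  ∑ s : S, Real.negMulLog (μ (X ⁻¹' {s})).toReal

/-- Conditional Shannon entropy `H(X | Y) = H(X, Y) - H(Y)`. -/
noncomputable def condShannonEntropy {Ω : Type*} [MeasurableSpace Ω]
    {S T : Type*} [Fintype S] [Fintype T]
    (μ : Measure Ω) (X : Ω → S) (Y : Ω → T) : ℝ :=
  shannonEntropy μ (fun ω => (X ω, Y ω)) - shannonEntropy μ Y

/-- Shannon mutual information `I(X : Y) = H(X) - H(X | Y)`. -/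
noncomputable def mutualInfo {Ω : Type*} [MeasurableSpace Ω]
    {S T : Type*} [Fintype S] [Fintype T]
    (μ : Measure Ω) (X : Ω → S) (Y : Ω → T) : ℝ :=
  shannonEntropy μ X - condShannonEntropy μ X Y

lemma dropout_single_mutualInfo
    {Ω : Type*} [MeasurableSpace Ω] (μ : Measure Ω) [IsProbabilityMeasure μ]
    {S : Type*} [Fintype S] [MeasurableSpace S] [MeasurableSingletonClass S]
    (A C : Ω → S) (hA : Measurable A)
    (φ : S) (hAφ : ∀ ω, A ω ≠ φ)
    (T : S → S) (hTinj : Function.Injective T) (hTφ : T φ = φ)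
    (α : ℝ) (D : Set Ω) (hD : MeasurableSet D)
    (hPD : (μ D).toReal = α)
    (hindep : ∀ s : S, μ (D ∩ A ⁻¹' {s}) = μ D * μ (A ⁻¹' {s}))
    (hCdef : ∀ ω, C ω = if ω ∈ D then T (A ω) else φ) :
    (shannonEntropy μ A - (shannonEntropy μ (fun ω => (A ω, C ω))
      - shannonEntropy μ C)) = α * shannonEntropy μ A := by
  have hTbij : Function.Bijective T := Finite.injective_iff_bijective.mp hTinj
  have hTne : ∀ s : S, s ≠ φ → T s ≠ φ := by
    intro s hs h; exact hs (hTinj (h.trans hTφ.symm))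
  set p : S → ℝ := fun s => (μ (A ⁻¹' {s})).toReal with hp
  have hpφ : p φ = 0 := by
    have h : A ⁻¹' {φ} = ∅ := by
      ext ω; simp [hAφ ω]
    simp [hp, h]
  have hpsum : ∑ s : S, p s = 1 := by
    have h1 : (∑ s : S, μ (A ⁻¹' {s})) = μ (A ⁻¹' (Finset.univ : Finset S)) :=
      sum_measure_preimage_singleton _ (fun y _ => hA (measurableSet_singleton y))
    have h2 : (A ⁻¹' ((Finset.univ : Finset S) : Set S)) = Set.univ := by simp
    rw [h2, measure_univ] at h1
    calc ∑ s : S, p s = (∑ s : S, μ (A ⁻¹' {s})).toReal := by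
          rw [ENNReal.toReal_sum (fun s _ => measure_ne_top μ _)]
      _ = 1 := by rw [h1]; simp
  have hαle : μ D ≤ 1 := prob_le_one
  have hDinter : ∀ s : S, (μ (D ∩ A ⁻¹' {s})).toReal = α * p s := by
    intro s; rw [hindep s, ENNReal.toReal_mul, hPD]
  have hcompl : ∀ s : S, (μ (Dᶜ ∩ A ⁻¹' {s})).toReal = (1 - α) * p s := by
    intro s
    have hX : μ (A ⁻¹' {s} ∩ D) + μ (A ⁻¹' {s} \ D) = μ (A ⁻¹' {s}) :=
      measure_inter_add_diff _ hD
    have h1 : (μ (A ⁻¹' {s} ∩ D)).toReal = α * p s := by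
      rw [Set.inter_comm]; exact hDinter s
    have h2 : A ⁻¹' {s} \ D = Dᶜ ∩ A ⁻¹' {s} := by
      ext ω; simp [Set.mem_diff]; tauto
    have h3 : (μ (A ⁻¹' {s} ∩ D)).toReal + (μ (A ⁻¹' {s} \ D)).toReal = p s := by
      rw [← ENNReal.toReal_add (measure_ne_top μ _) (measure_ne_top μ _), hX]
    rw [h2, h1] at h3
    linarith
  -- distribution of C
  have hCφ : (μ (C ⁻¹' {φ})).toReal = 1 - α := by
    have hset : C ⁻¹' {φ} = Dᶜ := by
      ext ω
      simp only [Set.mem_preimage, Set.mem_singleton_iff, Set.mem_compl_iff]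
      constructor
      · intro h hω; rw [hCdef ω, if_pos hω] at h; exact hTne _ (hAφ ω) h
      · intro hω; rw [hCdef ω, if_neg hω]
    rw [hset, measure_compl hD (measure_ne_top μ D), measure_univ,
      ENNReal.toReal_sub_of_le hαle ENNReal.one_ne_top, hPD]
    simp
  have hCT : ∀ s : S, s ≠ φ → (μ (C ⁻¹' {T s})).toReal = α * p s := by
    intro s hs
    have hTsφ : T s ≠ φ := hTne s hs
    have hset : C ⁻¹' {T s} = D ∩ A ⁻¹' {s} := by
      ext ω
      simp only [Set.mem_preimage, Set.mem_singleton_iff, Set.mem_inter_iff]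
      constructor
      · intro h
        by_cases hω : ω ∈ D
        · rw [hCdef ω, if_pos hω] at h; exact ⟨hω, hTinj h⟩
        · rw [hCdef ω, if_neg hω] at h; exact absurd h.symm hTsφ
      · rintro ⟨hω, h1⟩
        rw [hCdef ω, if_pos hω, h1]
    rw [hset]; exact hDinter s
  -- joint distribution
  have hqval : ∀ s c : S, (μ ((fun ω => (A ω, C ω)) ⁻¹' {(s, c)})).toReal =
      (if c = T s then α * p s else 0) + (if c = φ then (1 - α) * p s else 0) := by
    intro s c
    by_cases hs : s = φ
    · have hps : p s = 0 := by rw [hs]; exact hpφ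
      have hset : ((fun ω => (A ω, C ω)) ⁻¹' {(s, c)}) = ∅ := by
        ext ω
        simp only [Set.mem_preimage, Set.mem_singleton_iff, Prod.mk.injEq,
          Set.mem_empty_iff_false, iff_false, not_and]
        intro h1 _
        exact hAφ ω (h1.trans hs)
      rw [hset, hps]
      simp
    · have hTsφ : T s ≠ φ := hTne s hs
      by_cases hc : c = T s
      · have hcφ : c ≠ φ := fun h => hTsφ (hc.symm.trans h)
        have hset : ((fun ω => (A ω, C ω)) ⁻¹' {(s, c)}) = D ∩ A ⁻¹' {s} := by
          ext ω
          simp only [Set.mem_preimage, Set.mem_singleton_iff, Prod.mk.injEq,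
            Set.mem_inter_iff]
          constructor
          · rintro ⟨h1, h2⟩
            by_cases hω : ω ∈ D
            · exact ⟨hω, h1⟩
            · rw [hCdef ω, if_neg hω] at h2
              exact absurd (hc.symm.trans h2.symm) hTsφ
          · rintro ⟨hω, h1⟩
            refine ⟨h1, ?_⟩
            rw [hCdef ω, if_pos hω, h1, ← hc]
        rw [hset, hDinter s, if_pos hc, if_neg hcφ, add_zero]
      · by_cases hcφ : c = φ
        · have hset : ((fun ω => (A ω, C ω)) ⁻¹' {(s, c)}) = Dᶜ ∩ A ⁻¹' {s} := by
            ext ω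
            simp only [Set.mem_preimage, Set.mem_singleton_iff, Prod.mk.injEq,
              Set.mem_inter_iff, Set.mem_compl_iff]
            constructor
            · rintro ⟨h1, h2⟩
              by_cases hω : ω ∈ D
              · rw [hCdef ω, if_pos hω, h1] at h2
                exact absurd (h2.trans hcφ) hTsφ
              · exact ⟨hω, h1⟩
            · rintro ⟨hω, h1⟩
              exact ⟨h1, by rw [hCdef ω, if_neg hω, hcφ]⟩
          rw [hset, hcompl s, if_neg hc, if_pos hcφ, zero_add]
        · have hset : ((fun ω => (A ω, C ω)) ⁻¹' {(s, c)}) = ∅ := by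
            ext ω
            simp only [Set.mem_preimage, Set.mem_singleton_iff, Prod.mk.injEq,
              Set.mem_empty_iff_false, iff_false, not_and]
            intro h1 h2
            by_cases hω : ω ∈ D
            · rw [hCdef ω, if_pos hω, h1] at h2; exact hc h2.symm
            · rw [hCdef ω, if_neg hω] at h2; exact hcφ h2.symm
          rw [hset, if_neg hc, if_neg hcφ]
          simp
  -- entropy of C
  have hHC : shannonEntropy μ C =
      negMulLog (1 - α) + ∑ s : S, negMulLog (α * p s) := by
    rw [shannonEntropy]
    rw [← hTbij.sum_comp (fun c => negMulLog (μ (C ⁻¹' {c})).toReal)]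
    rw [← Finset.add_sum_erase Finset.univ _ (Finset.mem_univ φ)]
    rw [hTφ, hCφ]
    congr 1
    rw [← Finset.add_sum_erase Finset.univ (fun s => negMulLog (α * p s))
      (Finset.mem_univ φ), hpφ]
    simp only [mul_zero, negMulLog_zero, zero_add]
    exact Finset.sum_congr rfl fun s hs => by rw [hCT s (Finset.ne_of_mem_erase hs)]
  -- joint entropy
  have hHAC : shannonEntropy μ (fun ω => (A ω, C ω)) =
      ∑ s : S, (negMulLog (α * p s) + negMulLog ((1 - α) * p s)) := by
    rw [shannonEntropy, Fintype.sum_prod_type]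
    apply Finset.sum_congr rfl
    intro s _
    by_cases hs : s = φ
    · have hps : p s = 0 := by rw [hs]; exact hpφ
      rw [hps]
      simp only [mul_zero, negMulLog_zero, add_zero]
      apply Finset.sum_eq_zero
      intro c _
      rw [hqval s c, hps]
      simp
    · have hTsφ : T s ≠ φ := hTne s hs
      have key : ∀ c : S, negMulLog (μ ((fun ω => (A ω, C ω)) ⁻¹' {(s, c)})).toReal =
          (if c = T s then negMulLog (α * p s) else 0) +
          (if c = φ then negMulLog ((1 - α) * p s) else 0) := by
        intro c
        rw [hqval s c]
        by_cases h1 : c = T s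
        · have h2 : c ≠ φ := fun h => hTsφ (h1.symm.trans h)
          simp [h1, h2, hTsφ]
        · by_cases h2 : c = φ
          · simp [h1, h2, hTsφ, Ne.symm hTsφ]
          · simp [h1, h2, hTsφ, Ne.symm hTsφ]
      simp only [key]
      rw [Finset.sum_add_distrib, Finset.sum_ite_eq' Finset.univ (T s),
        Finset.sum_ite_eq' Finset.univ φ]
      simp
  -- arithmetic
  have hHA : shannonEntropy μ A = ∑ s : S, negMulLog (p s) := rfl
  have expand : ∀ a : ℝ, ∑ s : S, negMulLog (a * p s)
      = a * shannonEntropy μ A + negMulLog a := by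
    intro a
    have h : ∑ s : S, negMulLog (a * p s)
        = ∑ s : S, (a * negMulLog (p s) + negMulLog a * p s) :=
      Finset.sum_congr rfl fun s _ => by rw [negMulLog_mul]; ring
    rw [h, Finset.sum_add_distrib, ← Finset.mul_sum, ← Finset.mul_sum, hpsum, hHA]
    ring
  rw [hHC, hHAC, Finset.sum_add_distrib, expand α, expand (1 - α)]
  ring

/-- Let `A` be a discrete random variable with values in a finite set
not containing the null symbol `φ`, let `B` be the output of a dropout channel applied
to `A` with transmission probability `α_{A,B}` (event `D₁`, map `T₁`), and let `C` be
the output of a dropout channel applied to `B` with transmission probability `α_{B,C}`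
(event `D₂`, map `T₂`), where the two dropout events and `A` are mutually independent.
Then the Shannon mutual information between the endpoints of this length-2 chain equals
the product of the transmission probabilities times the entropy of the source:
`I(A : C) = α_{A,B} · α_{B,C} · H(A)`. -/
theorem dropout_chain_mutualInfo
    {Ω : Type*} [MeasurableSpace Ω] (μ : Measure Ω) [IsProbabilityMeasure μ]
    {S : Type*} [Fintype S] [MeasurableSpace S] [MeasurableSingletonClass S]
    (A B C : Ω → S) (hA : Measurable A) (hB : Measurable B) (hC : Measurable C)
    (φ : S) (hAφ : ∀ ω, A ω ≠ φ)
    (T₁ T₂ : S → S) (hT₁inj : Function.Injective T₁) (hT₁φ : T₁ φ = φ)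
    (hT₂inj : Function.Injective T₂) (hT₂φ : T₂ φ = φ)
    (αAB αBC : ℝ) (hαAB : αAB ∈ Set.Icc (0 : ℝ) 1) (hαBC : αBC ∈ Set.Icc (0 : ℝ) 1)
    (D₁ D₂ : Set Ω) (hD₁ : MeasurableSet D₁) (hD₂ : MeasurableSet D₂)
    (hPD₁ : (μ D₁).toReal = αAB) (hPD₂ : (μ D₂).toReal = αBC)
    -- mutual independence of `D₁`, `D₂` and `A`:
    (hindep₁ : ∀ s : S, μ (D₁ ∩ A ⁻¹' {s}) = μ D₁ * μ (A ⁻¹' {s}))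
    (hindep₂ : ∀ s : S, μ (D₂ ∩ A ⁻¹' {s}) = μ D₂ * μ (A ⁻¹' {s}))
    (hindep₁₂ : μ (D₁ ∩ D₂) = μ D₁ * μ D₂)
    (hindep₁₂A : ∀ s : S, μ (D₁ ∩ D₂ ∩ A ⁻¹' {s}) = μ D₁ * μ D₂ * μ (A ⁻¹' {s}))
    (hBdef : ∀ ω, B ω = if ω ∈ D₁ then T₁ (A ω) else φ)
    (hCdef : ∀ ω, C ω = if ω ∈ D₂ then T₂ (B ω) else φ) :
    mutualInfo μ A C = αAB * αBC * shannonEntropy μ A := by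
  have hT : Function.Injective (T₂ ∘ T₁) := hT₂inj.comp hT₁inj
  have hTφ : (T₂ ∘ T₁) φ = φ := by simp [hT₁φ, hT₂φ]
  have hD : MeasurableSet (D₁ ∩ D₂) := hD₁.inter hD₂
  have hPD : (μ (D₁ ∩ D₂)).toReal = αAB * αBC := by
    rw [hindep₁₂, ENNReal.toReal_mul, hPD₁, hPD₂]
  have hindep : ∀ s : S, μ ((D₁ ∩ D₂) ∩ A ⁻¹' {s}) = μ (D₁ ∩ D₂) * μ (A ⁻¹' {s}) := by
    intro s; rw [hindep₁₂A s, hindep₁₂]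
  have key := dropout_single_mutualInfo μ A C hA φ hAφ (T₂ ∘ T₁) hT hTφ
    (αAB * αBC) (D₁ ∩ D₂) hD hPD hindep (fun ω => by
      rw [hCdef ω, hBdef ω]
      by_cases h1 : ω ∈ D₁ <;> by_cases h2 : ω ∈ D₂ <;>
        simp [h1, h2, Set.mem_inter_iff, hT₂φ])
  rw [mutualInfo, condShannonEntropy]
  linarith [key]
end

section
/- (Separability violates faithfulness — probabilistic part.) Let U₁, U₂ be discrete random variables and let V be a separable common child of U₁ and U₂: there exist random variables N₁, N₂ (exogenous noises) and functions g₁, g₂ such that the pair (U₁, N₁) is independent of the pair (U₂, N₂), and there is an injective (invertible on its range) map identifying V with the pair (g₁(U₁, N₁), g₂(U₂, N₂)). Then U₁ and U₂ are conditionally independent given V; equivalently, the conditional Shannon mutual information I(U₁ : U₂ | V) equals 0. -/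
open MeasureTheory ProbabilityTheory Real
open scoped Classical

/-- Conditional Shannon mutual information
`I(X : Y | Z) = H(X | Z) + H(Y | Z) - H((X, Y) | Z)`. -/
noncomputable def condMutualInfo {Ω : Type*} [MeasurableSpace Ω]
    {S T W : Type*} [Fintype S] [Fintype T] [Fintype W]
    (μ : Measure Ω) (X : Ω → S) (Y : Ω → T) (Z : Ω → W) : ℝ :=
  condShannonEntropy μ X Z + condShannonEntropy μ Y Z
    - condShannonEntropy μ (fun ω => (X ω, Y ω)) Z

open scoped ENNReal

lemma sum_fiber_toReal {Ω S : Type*} [MeasurableSpace Ω] [Fintype S]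
    [MeasurableSpace S] [MeasurableSingletonClass S]
    (μ : Measure Ω) [IsFiniteMeasure μ] (X : Ω → S) (hX : Measurable X)
    {A : Set Ω} (hA : MeasurableSet A) :
    ∑ s : S, (μ (X ⁻¹' {s} ∩ A)).toReal = (μ A).toReal := by
  rw [← ENNReal.toReal_sum (fun a _ => measure_ne_top μ _)]
  congr 1
  have hdisj : Pairwise (Function.onFun Disjoint (fun s => X ⁻¹' {s} ∩ A)) := by
    intro i j hij
    simp only [Function.onFun, Set.disjoint_left]
    rintro ω ⟨h1, -⟩ ⟨h2, -⟩
    exact hij (h1.symm.trans h2)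
  have hmeas : ∀ s : S, MeasurableSet (X ⁻¹' {s} ∩ A) :=
    fun s => (hX (measurableSet_singleton s)).inter hA
  have h : μ A = ∑ s : S, μ (X ⁻¹' {s} ∩ A) := by
    have hcover : A = ⋃ s : S, X ⁻¹' {s} ∩ A := by ext ω; simp
    conv_lhs => rw [hcover]
    rw [measure_iUnion hdisj hmeas, tsum_fintype]
  exact h.symm

lemma pair_preimage {Ω S T : Type*} (X : Ω → S) (Y : Ω → T) (a : S) (b : T) :
    (fun ω => (X ω, Y ω)) ⁻¹' {(a, b)} = X ⁻¹' {a} ∩ Y ⁻¹' {b} := by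
  ext ω; simp [Prod.ext_iff]


/-- Separability violates faithfulness — probabilistic part.
Let `U₁`, `U₂` be discrete random variables and let `V` be a separable common child of
`U₁` and `U₂`: there are exogenous noises `N₁`, `N₂` and functions `g₁`, `g₂` such that
the pair `(U₁, N₁)` is independent of the pair `(U₂, N₂)`, and an injective map `e`
identifies `V` with the pair `(g₁ (U₁, N₁), g₂ (U₂, N₂))`.  Then `U₁` and `U₂` are
conditionally independent given `V`; equivalently `I(U₁ : U₂ | V) = 0`. -/
theorem separable_child_conditional_independence
    {Ω : Type*} [MeasurableSpace Ω] (μ : Measure Ω) [IsProbabilityMeasure μ]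
    {SU₁ SU₂ SN₁ SN₂ SV W₁ W₂ : Type*}
    [Fintype SU₁] [Fintype SU₂] [Fintype SN₁] [Fintype SN₂] [Fintype SV]
    [Fintype W₁] [Fintype W₂]
    [MeasurableSpace SU₁] [MeasurableSingletonClass SU₁]
    [MeasurableSpace SU₂] [MeasurableSingletonClass SU₂]
    [MeasurableSpace SN₁] [MeasurableSingletonClass SN₁]
    [MeasurableSpace SN₂] [MeasurableSingletonClass SN₂]
    [MeasurableSpace SV] [MeasurableSingletonClass SV]
    (U₁ : Ω → SU₁) (U₂ : Ω → SU₂) (N₁ : Ω → SN₁) (N₂ : Ω → SN₂) (V : Ω → SV)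
    (hU₁ : Measurable U₁) (hU₂ : Measurable U₂)
    (hN₁ : Measurable N₁) (hN₂ : Measurable N₂) (hV : Measurable V)
    (g₁ : SU₁ × SN₁ → W₁) (g₂ : SU₂ × SN₂ → W₂)
    (hindep : IndepFun (fun ω => (U₁ ω, N₁ ω)) (fun ω => (U₂ ω, N₂ ω)) μ)
    (e : SV → W₁ × W₂) (he : Function.Injective e)
    (hsep : ∀ ω, e (V ω) = (g₁ (U₁ ω, N₁ ω), g₂ (U₂ ω, N₂ ω))) :
    (∀ v : SV, μ (V ⁻¹' {v}) ≠ 0 → ∀ (u₁ : SU₁) (u₂ : SU₂),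
      μ[|V ⁻¹' {v}] (U₁ ⁻¹' {u₁} ∩ U₂ ⁻¹' {u₂})
        = μ[|V ⁻¹' {v}] (U₁ ⁻¹' {u₁}) * μ[|V ⁻¹' {v}] (U₂ ⁻¹' {u₂})) ∧
    condMutualInfo μ U₁ U₂ V = 0 := by
  classical
  set π₁ : Ω → SU₁ × SN₁ := fun ω => (U₁ ω, N₁ ω) with hπ₁
  set π₂ : Ω → SU₂ × SN₂ := fun ω => (U₂ ω, N₂ ω) with hπ₂
  -- sets in the product spaces
  set s0 : SV → Set (SU₁ × SN₁) := fun v => g₁ ⁻¹' {(e v).1} with hs0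
  set t0 : SV → Set (SU₂ × SN₂) := fun v => g₂ ⁻¹' {(e v).2} with ht0
  set s1 : SU₁ → SV → Set (SU₁ × SN₁) := fun u v => {p | p.1 = u} ∩ s0 v with hs1
  set t1 : SU₂ → SV → Set (SU₂ × SN₂) := fun u v => {p | p.1 = u} ∩ t0 v with ht1
  have hms0 : ∀ v, MeasurableSet (s0 v) := fun v => (Set.toFinite _).measurableSet
  have hmt0 : ∀ v, MeasurableSet (t0 v) := fun v => (Set.toFinite _).measurableSet
  have hms1 : ∀ u v, MeasurableSet (s1 u v) := fun u v => (Set.toFinite _).measurableSet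
  have hmt1 : ∀ u v, MeasurableSet (t1 u v) := fun u v => (Set.toFinite _).measurableSet
  -- event decompositions
  have hV0 : ∀ v, V ⁻¹' {v} = π₁ ⁻¹' s0 v ∩ π₂ ⁻¹' t0 v := by
    intro v
    ext ω
    simp only [Set.mem_preimage, Set.mem_inter_iff, Set.mem_singleton_iff, hs0, ht0]
    constructor
    · rintro rfl
      have h := hsep ω
      exact ⟨(congrArg Prod.fst h).symm, (congrArg Prod.snd h).symm⟩
    · rintro ⟨h1, h2⟩
      apply he
      rw [hsep ω]
      exact Prod.ext h1 h2
  have hV1 : ∀ u v, U₁ ⁻¹' {u} ∩ V ⁻¹' {v} = π₁ ⁻¹' s1 u v ∩ π₂ ⁻¹' t0 v := by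
    intro u v
    rw [hV0 v]
    ext ω
    simp only [Set.mem_inter_iff, Set.mem_preimage, Set.mem_singleton_iff, hs1,
      Set.mem_setOf_eq]
    tauto
  have hV2 : ∀ u v, U₂ ⁻¹' {u} ∩ V ⁻¹' {v} = π₁ ⁻¹' s0 v ∩ π₂ ⁻¹' t1 u v := by
    intro u v
    rw [hV0 v]
    ext ω
    simp only [Set.mem_inter_iff, Set.mem_preimage, Set.mem_singleton_iff, ht1,
      Set.mem_setOf_eq]
    tauto
  have hV12 : ∀ u₁ u₂ v, U₁ ⁻¹' {u₁} ∩ U₂ ⁻¹' {u₂} ∩ V ⁻¹' {v}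
      = π₁ ⁻¹' s1 u₁ v ∩ π₂ ⁻¹' t1 u₂ v := by
    intro u₁ u₂ v
    rw [hV0 v]
    ext ω
    simp only [Set.mem_inter_iff, Set.mem_preimage, Set.mem_singleton_iff, hs1, ht1,
      Set.mem_setOf_eq]
    tauto
  -- measure quantities
  set α : SV → ℝ≥0∞ := fun v => μ (π₁ ⁻¹' s0 v) with hα
  set β : SV → ℝ≥0∞ := fun v => μ (π₂ ⁻¹' t0 v) with hβ
  set α' : SU₁ → SV → ℝ≥0∞ := fun u v => μ (π₁ ⁻¹' s1 u v) with hα'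
  set β' : SU₂ → SV → ℝ≥0∞ := fun u v => μ (π₂ ⁻¹' t1 u v) with hβ'
  have hμV : ∀ v, μ (V ⁻¹' {v}) = α v * β v := fun v => by
    rw [hV0 v]; exact hindep.measure_inter_preimage_eq_mul _ _ (hms0 v) (hmt0 v)
  have hμ1 : ∀ u v, μ (U₁ ⁻¹' {u} ∩ V ⁻¹' {v}) = α' u v * β v := fun u v => by
    rw [hV1 u v]; exact hindep.measure_inter_preimage_eq_mul _ _ (hms1 u v) (hmt0 v)
  have hμ2 : ∀ u v, μ (U₂ ⁻¹' {u} ∩ V ⁻¹' {v}) = α v * β' u v := fun u v => by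
    rw [hV2 u v]; exact hindep.measure_inter_preimage_eq_mul _ _ (hms0 v) (hmt1 u v)
  have hμ12 : ∀ u₁ u₂ v, μ (U₁ ⁻¹' {u₁} ∩ U₂ ⁻¹' {u₂} ∩ V ⁻¹' {v}) = α' u₁ v * β' u₂ v :=
    fun u₁ u₂ v => by
    rw [hV12 u₁ u₂ v]; exact hindep.measure_inter_preimage_eq_mul _ _ (hms1 u₁ v) (hmt1 u₂ v)
  have hVmeas : ∀ v : SV, MeasurableSet (V ⁻¹' {v}) := fun v => hV (measurableSet_singleton v)
  -- Part 1: conditional independence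
  have part1 : ∀ v : SV, μ (V ⁻¹' {v}) ≠ 0 → ∀ (u₁ : SU₁) (u₂ : SU₂),
      μ[|V ⁻¹' {v}] (U₁ ⁻¹' {u₁} ∩ U₂ ⁻¹' {u₂})
        = μ[|V ⁻¹' {v}] (U₁ ⁻¹' {u₁}) * μ[|V ⁻¹' {v}] (U₂ ⁻¹' {u₂}) := by
    intro v hv u₁ u₂
    have hαne : α v ≠ 0 := by
      intro h; apply hv; rw [hμV v, h, zero_mul]
    have hβne : β v ≠ 0 := by
      intro h; apply hv; rw [hμV v, h, mul_zero]
    have hαfin : α v ≠ ⊤ := measure_ne_top μ _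
    have hβfin : β v ≠ ⊤ := measure_ne_top μ _
    rw [cond_apply (hVmeas v), cond_apply (hVmeas v), cond_apply (hVmeas v)]
    have e1 : V ⁻¹' {v} ∩ (U₁ ⁻¹' {u₁} ∩ U₂ ⁻¹' {u₂}) = U₁ ⁻¹' {u₁} ∩ U₂ ⁻¹' {u₂} ∩ V ⁻¹' {v} :=
      Set.inter_comm _ _
    have e2 : V ⁻¹' {v} ∩ U₁ ⁻¹' {u₁} = U₁ ⁻¹' {u₁} ∩ V ⁻¹' {v} := Set.inter_comm _ _
    have e3 : V ⁻¹' {v} ∩ U₂ ⁻¹' {u₂} = U₂ ⁻¹' {u₂} ∩ V ⁻¹' {v} := Set.inter_comm _ _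
    rw [e1, e2, e3, hμV v, hμ12 u₁ u₂ v, hμ1 u₁ v, hμ2 u₂ v,
      ENNReal.mul_inv (Or.inl hαne) (Or.inl hαfin)]
    calc (α v)⁻¹ * (β v)⁻¹ * (α' u₁ v * β' u₂ v)
        = ((α v)⁻¹ * α' u₁ v) * ((β v)⁻¹ * β' u₂ v) * ((β v)⁻¹ * β v) * ((α v)⁻¹ * α v) := by
          rw [ENNReal.inv_mul_cancel hβne hβfin, ENNReal.inv_mul_cancel hαne hαfin]
          ring
      _ = (α v)⁻¹ * (β v)⁻¹ * (α' u₁ v * β v) * ((α v)⁻¹ * (β v)⁻¹ * (α v * β' u₂ v)) := by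
          ring
  refine ⟨part1, ?_⟩
  -- Part 2: mutual information vanishes
  -- real-valued probabilities
  set P : SV → ℝ := fun v => (μ (V ⁻¹' {v})).toReal with hP
  set P1 : SU₁ → SV → ℝ := fun u v => (μ (U₁ ⁻¹' {u} ∩ V ⁻¹' {v})).toReal with hP1
  set P2 : SU₂ → SV → ℝ := fun u v => (μ (U₂ ⁻¹' {u} ∩ V ⁻¹' {v})).toReal with hP2
  set P12 : SU₁ → SU₂ → SV → ℝ :=
    fun u₁ u₂ v => (μ (U₁ ⁻¹' {u₁} ∩ U₂ ⁻¹' {u₂} ∩ V ⁻¹' {v})).toReal with hP12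
  have hkey : ∀ u₁ u₂ v, P12 u₁ u₂ v * P v = P1 u₁ v * P2 u₂ v := by
    intro u₁ u₂ v
    simp only [hP, hP1, hP2, hP12, hμV v, hμ1 u₁ v, hμ2 u₂ v, hμ12 u₁ u₂ v,
      ENNReal.toReal_mul]
    ring
  have hPnn : ∀ v, 0 ≤ P v := fun v => ENNReal.toReal_nonneg
  have hP12nn : ∀ u₁ u₂ v, 0 ≤ P12 u₁ u₂ v := fun _ _ _ => ENNReal.toReal_nonneg
  have hmono : ∀ {A B : Set Ω}, A ⊆ B → (μ A).toReal ≤ (μ B).toReal := by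
    intro A B h
    exact ENNReal.toReal_mono (measure_ne_top μ _) (measure_mono h)
  -- per-term log identity
  have hterm : ∀ u₁ u₂ v, negMulLog (P12 u₁ u₂ v)
      = -(P12 u₁ u₂ v * Real.log (P1 u₁ v)) - P12 u₁ u₂ v * Real.log (P2 u₂ v)
        + P12 u₁ u₂ v * Real.log (P v) := by
    intro u₁ u₂ v
    by_cases h : P12 u₁ u₂ v = 0
    · simp [h, negMulLog]
    · have h12 : 0 < P12 u₁ u₂ v := lt_of_le_of_ne (hP12nn u₁ u₂ v) (Ne.symm h)
      have hle1 : P12 u₁ u₂ v ≤ P1 u₁ v := hmono (by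
        intro ω hω; exact ⟨hω.1.1, hω.2⟩)
      have hle2 : P12 u₁ u₂ v ≤ P2 u₂ v := hmono (by
        intro ω hω; exact ⟨hω.1.2, hω.2⟩)
      have hleP : P12 u₁ u₂ v ≤ P v := hmono (fun ω hω => hω.2)
      have h1 : 0 < P1 u₁ v := lt_of_lt_of_le h12 hle1
      have h2 : 0 < P2 u₂ v := lt_of_lt_of_le h12 hle2
      have hp : 0 < P v := lt_of_lt_of_le h12 hleP
      have hlog : Real.log (P12 u₁ u₂ v) + Real.log (P v)
          = Real.log (P1 u₁ v) + Real.log (P2 u₂ v) := by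
        rw [← Real.log_mul h (ne_of_gt hp), ← Real.log_mul (ne_of_gt h1) (ne_of_gt h2),
          hkey u₁ u₂ v]
      have : Real.log (P12 u₁ u₂ v)
          = Real.log (P1 u₁ v) + Real.log (P2 u₂ v) - Real.log (P v) := by linarith
      rw [negMulLog, this]; ring
  -- marginal sums
  have m1 : ∀ u₁ v, ∑ u₂ : SU₂, P12 u₁ u₂ v = P1 u₁ v := by
    intro u₁ v
    simp only [hP12, hP1]
    rw [← sum_fiber_toReal μ U₂ hU₂ ((hU₁ (measurableSet_singleton u₁)).inter (hVmeas v))]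
    apply Finset.sum_congr rfl
    intro u₂ _
    congr 2
    ext ω
    simp only [Set.mem_inter_iff, Set.mem_preimage, Set.mem_singleton_iff]
    tauto
  have m2 : ∀ u₂ v, ∑ u₁ : SU₁, P12 u₁ u₂ v = P2 u₂ v := by
    intro u₂ v
    simp only [hP12, hP2]
    rw [← sum_fiber_toReal μ U₁ hU₁ ((hU₂ (measurableSet_singleton u₂)).inter (hVmeas v))]
    apply Finset.sum_congr rfl
    intro u₁ _
    congr 2
    ext ω
    simp only [Set.mem_inter_iff, Set.mem_preimage, Set.mem_singleton_iff]
    tauto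
  have m4 : ∀ v, ∑ u₁ : SU₁, P1 u₁ v = P v := by
    intro v
    simp only [hP1, hP]
    exact sum_fiber_toReal μ U₁ hU₁ (hVmeas v)
  have m5 : ∀ v, ∑ u₂ : SU₂, P2 u₂ v = P v := by
    intro v
    simp only [hP2, hP]
    exact sum_fiber_toReal μ U₂ hU₂ (hVmeas v)
  -- entropies in terms of P's
  have HV : shannonEntropy μ V = ∑ v : SV, negMulLog (P v) := rfl
  have H1 : shannonEntropy μ (fun ω => (U₁ ω, V ω))
      = ∑ u₁ : SU₁, ∑ v : SV, negMulLog (P1 u₁ v) := by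
    rw [shannonEntropy, Fintype.sum_prod_type]
    apply Finset.sum_congr rfl; intro u₁ _
    apply Finset.sum_congr rfl; intro v _
    rw [pair_preimage]
  have H2 : shannonEntropy μ (fun ω => (U₂ ω, V ω))
      = ∑ u₂ : SU₂, ∑ v : SV, negMulLog (P2 u₂ v) := by
    rw [shannonEntropy, Fintype.sum_prod_type]
    apply Finset.sum_congr rfl; intro u₂ _
    apply Finset.sum_congr rfl; intro v _
    rw [pair_preimage]
  have H12 : shannonEntropy μ (fun ω => ((U₁ ω, U₂ ω), V ω))
      = ∑ u₁ : SU₁, ∑ u₂ : SU₂, ∑ v : SV, negMulLog (P12 u₁ u₂ v) := by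
    rw [shannonEntropy, Fintype.sum_prod_type, Fintype.sum_prod_type]
    apply Finset.sum_congr rfl; intro u₁ _
    apply Finset.sum_congr rfl; intro u₂ _
    apply Finset.sum_congr rfl; intro v _
    rw [pair_preimage (fun ω => (U₁ ω, U₂ ω)) V, pair_preimage]
  -- chain rule computation
  have hsum : ∑ u₁ : SU₁, ∑ u₂ : SU₂, ∑ v : SV, negMulLog (P12 u₁ u₂ v)
      = (∑ u₁ : SU₁, ∑ v : SV, negMulLog (P1 u₁ v))
        + (∑ u₂ : SU₂, ∑ v : SV, negMulLog (P2 u₂ v))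
        - ∑ v : SV, negMulLog (P v) := by
    have e1 : ∑ u₁ : SU₁, ∑ u₂ : SU₂, ∑ v : SV, negMulLog (P12 u₁ u₂ v)
        = (∑ u₁ : SU₁, ∑ u₂ : SU₂, ∑ v : SV, -(P12 u₁ u₂ v * Real.log (P1 u₁ v)))
          + (∑ u₁ : SU₁, ∑ u₂ : SU₂, ∑ v : SV, -(P12 u₁ u₂ v * Real.log (P2 u₂ v)))
          + ∑ u₁ : SU₁, ∑ u₂ : SU₂, ∑ v : SV, P12 u₁ u₂ v * Real.log (P v) := by
      rw [← Finset.sum_add_distrib, ← Finset.sum_add_distrib]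
      apply Finset.sum_congr rfl; intro u₁ _
      rw [← Finset.sum_add_distrib, ← Finset.sum_add_distrib]
      apply Finset.sum_congr rfl; intro u₂ _
      rw [← Finset.sum_add_distrib, ← Finset.sum_add_distrib]
      apply Finset.sum_congr rfl; intro v _
      rw [hterm u₁ u₂ v]; ring
    have e2 : ∑ u₁ : SU₁, ∑ u₂ : SU₂, ∑ v : SV, -(P12 u₁ u₂ v * Real.log (P1 u₁ v))
        = ∑ u₁ : SU₁, ∑ v : SV, negMulLog (P1 u₁ v) := by
      apply Finset.sum_congr rfl; intro u₁ _
      rw [Finset.sum_comm]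
      apply Finset.sum_congr rfl; intro v _
      simp only [neg_mul_eq_mul_neg]
      rw [← Finset.sum_mul, m1 u₁ v, negMulLog]
      ring
    have e3 : ∑ u₁ : SU₁, ∑ u₂ : SU₂, ∑ v : SV, -(P12 u₁ u₂ v * Real.log (P2 u₂ v))
        = ∑ u₂ : SU₂, ∑ v : SV, negMulLog (P2 u₂ v) := by
      rw [Finset.sum_comm]
      apply Finset.sum_congr rfl; intro u₂ _
      rw [Finset.sum_comm]
      apply Finset.sum_congr rfl; intro v _
      simp only [neg_mul_eq_mul_neg]
      rw [← Finset.sum_mul, m2 u₂ v, negMulLog]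
      ring
    have e4 : ∑ u₁ : SU₁, ∑ u₂ : SU₂, ∑ v : SV, P12 u₁ u₂ v * Real.log (P v)
        = -∑ v : SV, negMulLog (P v) := by
      have : ∀ u₁ : SU₁, ∑ u₂ : SU₂, ∑ v : SV, P12 u₁ u₂ v * Real.log (P v)
          = ∑ v : SV, P1 u₁ v * Real.log (P v) := by
        intro u₁
        rw [Finset.sum_comm]
        apply Finset.sum_congr rfl; intro v _
        rw [← Finset.sum_mul, m1 u₁ v]
      simp_rw [this]
      rw [Finset.sum_comm, ← Finset.sum_neg_distrib]
      apply Finset.sum_congr rfl; intro v _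
      rw [← Finset.sum_mul, m4 v, negMulLog]
      ring
    rw [e1, e2, e3, e4]; ring
  rw [condMutualInfo, condShannonEntropy, condShannonEntropy, condShannonEntropy,
    H1, H2, H12, HV, hsum]
  ring
end
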